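/- Let α > -1, γ > α + 1/2, ω a function of modulus of continuity type, and 0 < η < −(2(α−γ)+1)/4. Then for every integer n ≥ 1, n^{(2α−2γ+1)/4} · ( ω(n^η) · n^{η(2(α−γ)+1)/4} + ∫_1^{n^η} ω(y) · y^{(2(α−γ)+1)/4 − 1} dy ) ≤ C · n^{η + (2(α−γ)+1)/4} · ω(1), where C depends only on α, γ, η. -/

import Mathlib

open MeasureTheory

def ModulusType (ω : ℝ → ℝ) : Prop :=
  ContinuousOn ω (Set.Ici 0) ∧ MonotoneOn ω (Set.Ici 0) ∧ ω 0 = 0 ∧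
    (∀ a b : ℝ, 0 ≤ a → 0 ≤ b → ω (a + b) ≤ ω a + ω b) ∧
    (∀ t : ℝ, 0 ≤ t → 0 ≤ ω t)

/-!
Subadditivity and monotonicity give the linear growth bound `ω y ≤ 2 y ω 1` for `y ≥ 1`.
With `b = (2(α - γ) + 1)/4 < 0`, the boundary term is then at most `2 n^η ω 1` because
`n^(η b) ≤ 1`, and the integrand is at most `2 ω 1` because `y^b ≤ 1`, so the integral is at most
`2 n^η ω 1` as well. Multiplying by `n^b` gives the claim with `C = 4`.
-/

theorem apply_natCast_mul_le_of_subadditive {ω : ℝ → ℝ} (h0 : ω 0 = 0)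
    (hsub : ∀ a b : ℝ, 0 ≤ a → 0 ≤ b → ω (a + b) ≤ ω a + ω b) {x : ℝ} (hx : 0 ≤ x) :
    ∀ m : ℕ, ω (m * x) ≤ m * ω x
  | 0 => by simp [h0]
  | m + 1 => by
    have ih := apply_natCast_mul_le_of_subadditive h0 hsub hx m
    calc ω ((m + 1 : ℕ) * x) = ω (m * x + x) := by push_cast; ring_nf
      _ ≤ ω (m * x) + ω x := hsub _ _ (by positivity) hx
      _ ≤ (m + 1 : ℕ) * ω x := by push_cast; linarith

namespace ModulusType

variable {ω : ℝ → ℝ}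

theorem apply_nonneg (hω : ModulusType ω) {t : ℝ} (ht : 0 ≤ t) : 0 ≤ ω t := hω.2.2.2.2 t ht

theorem apply_le_add_one_mul (hω : ModulusType ω) {y : ℝ} (hy : 0 ≤ y) :
    ω y ≤ (y + 1) * ω 1 := by
  obtain ⟨-, hmono, h0, hsub, hnn⟩ := hω
  calc ω y ≤ ω ⌈y⌉₊ := hmono hy (Set.mem_Ici.mpr (Nat.cast_nonneg _)) (Nat.le_ceil y)
    _ ≤ ⌈y⌉₊ * ω 1 := by
      simpa using apply_natCast_mul_le_of_subadditive h0 hsub zero_le_one ⌈y⌉₊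
    _ ≤ (y + 1) * ω 1 :=
      mul_le_mul_of_nonneg_right (Nat.ceil_lt_add_one hy).le (hnn 1 zero_le_one)

theorem apply_le_two_mul (hω : ModulusType ω) {y : ℝ} (hy : 1 ≤ y) : ω y ≤ 2 * y * ω 1 := by
  have h := hω.apply_le_add_one_mul (zero_le_one.trans hy)
  nlinarith [hω.apply_nonneg zero_le_one]

theorem apply_mul_rpow_le (hω : ModulusType ω) {b p y : ℝ} (hb : b ≤ 0) (hp : 1 ≤ p)
    (hy : 1 ≤ y) : ω y * p ^ b ≤ 2 * y * ω 1 :=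
  calc ω y * p ^ b ≤ 2 * y * ω 1 * 1 :=
        mul_le_mul (hω.apply_le_two_mul hy) (Real.rpow_le_one_of_one_le_of_nonpos hp hb)
          (by positivity) (by nlinarith [hω.apply_nonneg zero_le_one])
    _ = 2 * y * ω 1 := mul_one _

theorem apply_mul_rpow_sub_one_le (hω : ModulusType ω) {b y : ℝ} (hb : b ≤ 0) (hy : 1 ≤ y) :
    ω y * y ^ (b - 1) ≤ 2 * ω 1 := by
  have hy0 : 0 < y := zero_lt_one.trans_le hy
  have h := hω.apply_mul_rpow_le hb hy hy
  rwa [Real.rpow_sub_one hy0.ne', mul_div_assoc', div_le_iff₀ hy0, mul_right_comm]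

theorem setIntegral_Ioc_mul_rpow_sub_one_le (hω : ModulusType ω) {b X : ℝ} (hb : b ≤ 0)
    (hX : 1 ≤ X) : ∫ y in Set.Ioc 1 X, ω y * y ^ (b - 1) ≤ 2 * (X - 1) * ω 1 := by
  calc ∫ y in Set.Ioc 1 X, ω y * y ^ (b - 1) ≤ ∫ _ in Set.Ioc 1 X, 2 * ω 1 := by
        refine integral_mono_of_nonneg ?_ (integrableOn_const measure_Ioc_lt_top.ne) ?_
        all_goals filter_upwards [ae_restrict_mem measurableSet_Ioc] with y hy
        · have hy0 : 0 < y := zero_lt_one.trans hy.1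
          exact mul_nonneg (hω.apply_nonneg hy0.le) (Real.rpow_pos_of_pos hy0 _).le
        · exact hω.apply_mul_rpow_sub_one_le hb hy.1.le
    _ = 2 * (X - 1) * ω 1 := by
      rw [setIntegral_const, Real.volume_real_Ioc_of_le hX, smul_eq_mul]; ring

end ModulusType

theorem J3_estimate_general (α γ η : ℝ)
    (hη0 : 0 < η) (hη1 : η < -(2 * (α - γ) + 1) / 4)
    (ω : ℝ → ℝ) (hω : ModulusType ω) :
    ∃ C : ℝ, 0 < C ∧ ∀ n : ℕ, 1 ≤ n →
      (n : ℝ) ^ ((2 * α - 2 * γ + 1) / 4) *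
          (ω ((n : ℝ) ^ η) * (n : ℝ) ^ (η * (2 * (α - γ) + 1) / 4) +
            ∫ y in Set.Ioc (1 : ℝ) ((n : ℝ) ^ η), ω y * y ^ ((2 * (α - γ) + 1) / 4 - 1)) ≤
        C * (n : ℝ) ^ (η + (2 * (α - γ) + 1) / 4) * ω 1 := by
  refine ⟨4, four_pos, fun n hn => ?_⟩
  set b := (2 * (α - γ) + 1) / 4
  have hb : b < 0 := by simp only [b]; linarith
  have hn1 : (1 : ℝ) ≤ n := Nat.one_le_cast.mpr hn
  have hn0 : (0 : ℝ) < n := zero_lt_one.trans_le hn1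
  have hX : 1 ≤ (n : ℝ) ^ η := Real.one_le_rpow hn1 hη0.le
  have hboundary : ω ((n : ℝ) ^ η) * (n : ℝ) ^ (η * (2 * (α - γ) + 1) / 4) ≤
      2 * (n : ℝ) ^ η * ω 1 :=
    hω.apply_mul_rpow_le (by rw [mul_div_assoc]; nlinarith) hn1 hX
  have hintegral := hω.setIntegral_Ioc_mul_rpow_sub_one_le hb.le hX
  calc (n : ℝ) ^ ((2 * α - 2 * γ + 1) / 4) *
        (ω ((n : ℝ) ^ η) * (n : ℝ) ^ (η * (2 * (α - γ) + 1) / 4) +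
          ∫ y in Set.Ioc (1 : ℝ) ((n : ℝ) ^ η), ω y * y ^ (b - 1))
      ≤ (n : ℝ) ^ b * (4 * (n : ℝ) ^ η * ω 1) := by
        rw [show (2 * α - 2 * γ + 1) / 4 = b by ring]
        gcongr
        nlinarith [hω.apply_nonneg zero_le_one]
    _ = 4 * (n : ℝ) ^ (η + b) * ω 1 := by rw [Real.rpow_add hn0]; ring

theorem J3_estimate (α γ η : ℝ) (hα : -1 < α) (hγ : α + 1 / 2 < γ)
    (hη0 : 0 < η) (hη1 : η < -(2 * (α - γ) + 1) / 4)
    (ω : ℝ → ℝ) (hω : ModulusType ω) :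
    ∃ C : ℝ, 0 < C ∧ ∀ n : ℕ, 1 ≤ n →
      (n : ℝ) ^ ((2 * α - 2 * γ + 1) / 4) *
          (ω ((n : ℝ) ^ η) * (n : ℝ) ^ (η * (2 * (α - γ) + 1) / 4) +
            ∫ y in Set.Ioc (1 : ℝ) ((n : ℝ) ^ η), ω y * y ^ ((2 * (α - γ) + 1) / 4 - 1)) ≤
        C * (n : ℝ) ^ (η + (2 * (α - γ) + 1) / 4) * ω 1 :=
  J3_estimate_general α γ η hη0 hη1 ω hω
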